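/- A lottery p is SD-efficient at a profile R if and only if for every lottery q satisfying Σ_{y ≿_i x} q(y) ≥ Σ_{y ≿_i x} p(y) for all agents i and all alternatives x, it holds that Σ_{i∈N} Σ_{x∈A} Σ_{y ≿_i x} (q(y) − p(y)) = 0, i.e., the optimal value of the corresponding linear program is zero. -/

import Mathlib

open Classical

noncomputable section

variable {A : Type*} [Fintype A]

/-- A (weak) preference relation: complete and transitive. -/
def IsPref (r : A → A → Prop) : Prop :=
  (∀ x y, r x y ∨ r y x) ∧ ∀ x y z, r x y → r y z → r x z

/-- A lottery over the alternatives. -/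
def Lottery (A : Type*) [Fintype A] :=
  {p : A → ℝ // (∀ x, 0 ≤ p x) ∧ ∑ x, p x = 1}

/-- Probability that lottery `p` yields an alternative at least as good as `x` w.r.t. `r`. -/
def upperSum (r : A → A → Prop) (p : Lottery A) (x : A) : ℝ :=
  ∑ y, if r y x then p.1 y else 0

/-- `p` (weakly) stochastically dominates `q` w.r.t. the preference relation `r`. -/
def SDGe (r : A → A → Prop) (p q : Lottery A) : Prop :=
  ∀ x, upperSum r q x ≤ upperSum r p x

/-- Strict stochastic dominance. -/
def SDGt (r : A → A → Prop) (p q : Lottery A) : Prop :=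
  SDGe r p q ∧ ¬ SDGe r q p

/-- A profile assigning a preference relation to each of `n` agents; validity. -/
def ValidProfile {n : ℕ} (R : Fin n → A → A → Prop) : Prop :=
  ∀ i, IsPref (R i)

/-- `p` is SD-efficient at profile `R`. -/
def SDEfficientAt {n : ℕ} (R : Fin n → A → A → Prop) (p : Lottery A) : Prop :=
  ¬ ∃ q : Lottery A, (∀ i, SDGe (R i) q p) ∧ ∃ i, SDGt (R i) q p

def Anonymous {n : ℕ} (f : (Fin n → A → A → Prop) → Lottery A) : Prop :=
  ∀ R : Fin n → A → A → Prop, ValidProfile R →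
    ∀ σ : Equiv.Perm (Fin n), f (R ∘ σ) = f R

/-- Relabel a preference relation by a permutation of the alternatives. -/
def relabel (π : Equiv.Perm A) (r : A → A → Prop) : A → A → Prop :=
  fun x y => r (π.symm x) (π.symm y)

def relabelProfile {n : ℕ} (π : Equiv.Perm A) (R : Fin n → A → A → Prop) :
    Fin n → A → A → Prop :=
  fun i => relabel π (R i)

def Neutral {n : ℕ} (f : (Fin n → A → A → Prop) → Lottery A) : Prop :=
  ∀ R : Fin n → A → A → Prop, ValidProfile R →
    ∀ (π : Equiv.Perm A) (x : A), (f (relabelProfile π R)).1 (π x) = (f R).1 x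

def Efficient {n : ℕ} (f : (Fin n → A → A → Prop) → Lottery A) : Prop :=
  ∀ R : Fin n → A → A → Prop, ValidProfile R → SDEfficientAt R (f R)

def Strategyproof {n : ℕ} (f : (Fin n → A → A → Prop) → Lottery A) : Prop :=
  ¬ ∃ (R : Fin n → A → A → Prop) (i : Fin n) (r : A → A → Prop),
      ValidProfile R ∧ IsPref r ∧ SDGt (R i) (f (Function.update R i r)) (f R)

theorem Fintype.sum_sum_sub_eq_zero_iff {ι κ M : Type*} [Fintype ι] [Fintype κ]
    [AddCommGroup M] [PartialOrder M] [IsOrderedAddMonoid M] {f g : ι → κ → M}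
    (hgf : ∀ i j, g i j ≤ f i j) :
    ∑ i, ∑ j, (f i j - g i j) = 0 ↔ ∀ i j, f i j = g i j := by
  have hnonneg : ∀ i j, 0 ≤ f i j - g i j := fun i j => sub_nonneg.2 (hgf i j)
  rw [Fintype.sum_eq_zero_iff_of_nonneg fun i => Fintype.sum_nonneg (hnonneg i)]
  simp only [funext_iff, Pi.zero_apply,
    Fintype.sum_eq_zero_iff_of_nonneg (hnonneg _), sub_eq_zero]

theorem sdGt_iff_exists_upperSum_lt {r : A → A → Prop} {p q : Lottery A} (hqp : SDGe r q p) :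
    SDGt r q p ↔ ∃ x, upperSum r p x < upperSum r q x := by
  rw [SDGt, and_iff_right hqp]
  simp only [SDGe, not_forall, not_le]

theorem sdEfficientAt_iff_forall_upperSum_eq {n : ℕ} {R : Fin n → A → A → Prop}
    {p : Lottery A} :
    SDEfficientAt R p ↔
      ∀ q : Lottery A, (∀ i, SDGe (R i) q p) → ∀ i x, upperSum (R i) q x = upperSum (R i) p x := by
  refine not_exists.trans <| forall_congr' fun q => ?_
  refine not_and.trans <| forall_congr' fun hqp => ?_
  simp only [not_exists, sdGt_iff_exists_upperSum_lt (hqp _), not_lt]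
  exact forall_congr' fun i => forall_congr' fun x => ⟨(le_antisymm · (hqp i x)), le_of_eq⟩

theorem sd_efficient_iff_lp {A : Type*} [Fintype A] {n : ℕ}
    (R : Fin n → A → A → Prop) (p : Lottery A) :
    SDEfficientAt R p ↔
      ∀ q : Lottery A, (∀ (i : Fin n) (x : A), upperSum (R i) p x ≤ upperSum (R i) q x) →
        ∑ i : Fin n, ∑ x : A, (upperSum (R i) q x - upperSum (R i) p x) = 0 := by
  rw [sdEfficientAt_iff_forall_upperSum_eq]
  exact forall_congr' fun q => forall_congr' fun hqp =>
    (Fintype.sum_sum_sub_eq_zero_iff hqp).symm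

end
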